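/- arXiv:1510.07173 — 7 statements merged into one kernel-verified Lean document; each statement's English description precedes it below -/
import Mathlib

section
/- The function φ satisfies the integral inequality ∫_0^∞ φ(s)² / |φ′(s)| ds ≤ K0/γ², where K0 := a ξ^{2−δ}/(δ(2−δ)) + e^{−ξ} and φ′ denotes the derivative of φ (given piecewise by φ′(s) = −(aδ/γ^δ) s^{−(δ+1)} for 0 < s < ξ/γ and φ′(s) = −γ e^{−γs} for s > ξ/γ). -/
/-!
Split `(0, ∞)` at `c = ξ/γ`. On `(c, ∞)` the integrand is `e^{-γs}/γ`, whose integral is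
`e^{-ξ}/γ²`. On `(0, c)` write `M(s) = (a/γ^δ) s^{-δ}`, so `φ = M - b` and `|φ'| = δ M / s`.
Since `M` decreases and `M(c) = (ξ/δ) e^{-ξ} ≥ b ≥ 0` (as `ξ > 1 > δ`),
`(M - b)² ≤ M²`, so the integrand is at most `M s / δ`, a multiple of `s^{1-δ}`; integrating it
over `(0, c)` gives the first summand of `K0 / γ²`.
-/

open Set MeasureTheory Real

lemma integral_Ioo_zero_rpow {r c : ℝ} (hr : -1 < r) (hc : 0 ≤ c) :
    ∫ s in Ioo 0 c, s ^ r = c ^ (r + 1) / (r + 1) := by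
  rw [← integral_Ioc_eq_integral_Ioo, ← intervalIntegral.integral_of_le hc,
    integral_rpow (Or.inl hr), zero_rpow (by linarith), sub_zero]

lemma integrableOn_Ioi_and_integral_eq_Ioo_add_Ioi {f : ℝ → ℝ} {a c : ℝ} (hac : a ≤ c)
    (h₁ : IntegrableOn f (Ioo a c)) (h₂ : IntegrableOn f (Ioi c)) :
    IntegrableOn f (Ioi a) ∧ ∫ x in Ioi a, f x = (∫ x in Ioo a c, f x) + ∫ x in Ioi c, f x := by
  rw [← integrableOn_Ioc_iff_integrableOn_Ioo] at h₁
  rw [← Ioc_union_Ioi_eq_Ioi hac, ← integral_Ioc_eq_integral_Ioo]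
  exact ⟨h₁.union h₂, setIntegral_union (Ioc_disjoint_Ioi le_rfl) measurableSet_Ioi h₁ h₂⟩

lemma div_rpow_div_rpow {x y : ℝ} (hx : 0 ≤ x) (hy : 0 < y) (p q : ℝ) :
    (x / y) ^ p / y ^ q = x ^ p / y ^ (p + q) := by
  rw [div_rpow hx hy.le, div_div, ← rpow_add hy]

lemma sq_sub_div_abs_le_of_rpow_neg {C δ b s : ℝ} (hs : 0 < s) (hC : 0 < C) (hδ : 0 < δ)
    (hb : 0 ≤ b) (hbs : b ≤ C * s ^ (-δ)) :
    (C * s ^ (-δ) - b) ^ 2 / |-(C * δ) * s ^ (-(δ + 1))| ≤ C / δ * s ^ (1 - δ) := by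
  have hpow₁ : s ^ (-(δ + 1)) = s ^ (-δ) / s := by rw [neg_add', rpow_sub_one hs.ne']
  have hpow₂ : s ^ (1 - δ) = s * s ^ (-δ) := by rw [sub_eq_add_neg, rpow_add hs, rpow_one]
  have ht : 0 < s ^ (-δ) := rpow_pos_of_pos hs _
  rw [hpow₁, hpow₂]
  generalize s ^ (-δ) = t at ht hbs ⊢
  have hsq : (C * t - b) ^ 2 ≤ (C * t) ^ 2 := by nlinarith
  have hden : |-(C * δ) * (t / s)| = C * δ * t / s := by
    rw [neg_mul, abs_neg, abs_of_pos (by positivity)]; ring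
  rw [hden, div_le_iff₀ (by positivity)]
  calc (C * t - b) ^ 2 ≤ (C * t) ^ 2 := hsq
    _ = C / δ * (s * t) * (C * δ * t / s) := by field_simp

lemma integrableOn_and_integral_le_of_eqOn_rpow_neg_sub {f f' : ℝ → ℝ} {C δ b c : ℝ}
    (hC : 0 < C) (hδ₀ : 0 < δ) (hδ₂ : δ < 2) (hc : 0 < c) (hb : 0 ≤ b)
    (hbc : b ≤ C * c ^ (-δ))
    (hf : ∀ s ∈ Ioo 0 c, f s = C * s ^ (-δ) - b)
    (hf' : ∀ s ∈ Ioo 0 c, f' s = -(C * δ) * s ^ (-(δ + 1))) :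
    IntegrableOn (fun s => f s ^ 2 / |f' s|) (Ioo 0 c) ∧
      ∫ s in Ioo 0 c, f s ^ 2 / |f' s| ≤ C * c ^ (2 - δ) / (δ * (2 - δ)) := by
  set g : ℝ → ℝ := fun s => (C * s ^ (-δ) - b) ^ 2 / |-(C * δ) * s ^ (-(δ + 1))|
  have hfg : EqOn (fun s => f s ^ 2 / |f' s|) g (Ioo 0 c) := fun s hs => by
    simp only [g, hf s hs, hf' s hs]
  have hbound : ∀ s ∈ Ioo 0 c, g s ≤ C / δ * s ^ (1 - δ) := fun s hs =>
    sq_sub_div_abs_le_of_rpow_neg hs.1 hC hδ₀ hb <| hbc.trans <| mul_le_mul_of_nonneg_left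
      (rpow_le_rpow_of_nonpos hs.1 hs.2.le (by linarith)) hC.le
  have hmaj : IntegrableOn (fun s => C / δ * s ^ (1 - δ)) (Ioo 0 c) :=
    ((intervalIntegral.integrableOn_Ioo_rpow_iff hc).2 (by linarith)).const_mul _
  have hg : IntegrableOn g (Ioo 0 c) := by
    refine hmaj.mono' (by fun_prop) ?_
    filter_upwards [ae_restrict_mem measurableSet_Ioo] with s hs
    rw [norm_of_nonneg (by positivity)]
    exact hbound s hs
  refine ⟨hg.congr_fun hfg.symm measurableSet_Ioo, ?_⟩
  calc ∫ s in Ioo 0 c, f s ^ 2 / |f' s| = ∫ s in Ioo 0 c, g s :=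
        setIntegral_congr_fun measurableSet_Ioo hfg
    _ ≤ ∫ s in Ioo 0 c, C / δ * s ^ (1 - δ) :=
        setIntegral_mono_on hg hmaj measurableSet_Ioo hbound
    _ = C * c ^ (2 - δ) / (δ * (2 - δ)) := by
        rw [integral_const_mul, integral_Ioo_zero_rpow (by linarith) hc.le,
          show 1 - δ + 1 = 2 - δ by ring]
        field_simp

lemma integrableOn_and_integral_eq_of_eqOn_exp_neg_mul {f f' : ℝ → ℝ} {γ c : ℝ} (hγ : 0 < γ)
    (hf : ∀ s ∈ Ioi c, f s = exp (-γ * s))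
    (hf' : ∀ s ∈ Ioi c, f' s = -γ * exp (-γ * s)) :
    IntegrableOn (fun s => f s ^ 2 / |f' s|) (Ioi c) ∧
      ∫ s in Ioi c, f s ^ 2 / |f' s| = exp (-γ * c) / γ ^ 2 := by
  have hfg : EqOn (fun s => f s ^ 2 / |f' s|) (fun s => exp (-γ * s) / γ) (Ioi c) :=
    fun s hs => by
      simp only [hf s hs, hf' s hs, neg_mul γ, abs_neg, abs_mul, abs_of_pos hγ, abs_exp]
      field_simp
  refine ⟨IntegrableOn.congr_fun ((exp_neg_integrableOn_Ioi c hγ).div_const γ) hfg.symm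
    measurableSet_Ioi, ?_⟩
  rw [setIntegral_congr_fun measurableSet_Ioi hfg, integral_div,
    integral_exp_mul_Ioi (neg_lt_zero.2 hγ)]
  field_simp

theorem stmt4_general (n : ℕ) (hn : 3 ≤ n) (ξ δ γ : ℝ)
    (hξ1 : 4 - 4 / (n : ℝ) < ξ)
    (hδ : δ ∈ Set.Ioo (0 : ℝ) 1) (hγ : 0 < γ)
    (a b K0 : ℝ)
    (ha : a = ξ ^ (δ + 1) / δ * Real.exp (-ξ))
    (hb : b = (ξ / δ - 1) * Real.exp (-ξ))
    (hK0 : K0 = a * ξ ^ (2 - δ) / (δ * (2 - δ)) + Real.exp (-ξ))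
    (φ φ' : ℝ → ℝ)
    (hφ1 : ∀ s : ℝ, 0 < s → s < ξ / γ → φ s = a / γ ^ δ * s ^ (-δ) - b)
    (hφ2 : ∀ s : ℝ, ξ / γ ≤ s → φ s = Real.exp (-γ * s))
    (hφ'1 : ∀ s : ℝ, 0 < s → s < ξ / γ → φ' s = -(a * δ / γ ^ δ) * s ^ (-(δ + 1)))
    (hφ'2 : ∀ s : ℝ, ξ / γ < s → φ' s = -γ * Real.exp (-γ * s)) :
    MeasureTheory.IntegrableOn (fun s => (φ s) ^ 2 / |φ' s|) (Set.Ioi 0) ∧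
    ∫ s in Set.Ioi (0 : ℝ), (φ s) ^ 2 / |φ' s| ≤ K0 / γ ^ 2 := by
  obtain ⟨hδ₀, hδ₁⟩ := hδ
  have hξ : 1 < ξ := by
    have : 4 / (n : ℝ) ≤ 4 / 3 := by gcongr; exact_mod_cast hn
    linarith
  have hξ₀ : 0 < ξ := by linarith
  have hξδ : 1 ≤ ξ / δ := by rw [le_div_iff₀ hδ₀]; linarith
  have hb₀ : 0 ≤ b := by rw [hb]; exact mul_nonneg (by linarith) (exp_pos _).le
  have hMc : a / γ ^ δ * (ξ / γ) ^ (-δ) = ξ / δ * exp (-ξ) := by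
    have hξpow : ξ ^ (δ + 1) * ξ ^ (-δ) = ξ := by
      rw [← rpow_add hξ₀, add_neg_cancel_comm, rpow_one]
    rw [div_mul_comm, div_rpow_div_rpow hξ₀.le hγ, neg_add_cancel, rpow_zero, div_one, ha]
    linear_combination (exp (-ξ) / δ) * hξpow
  have hbc : b ≤ a / γ ^ δ * (ξ / γ) ^ (-δ) := by
    rw [hMc, hb]; exact mul_le_mul_of_nonneg_right (by linarith) (exp_pos _).le
  obtain ⟨hint₁, hI₁⟩ := integrableOn_and_integral_le_of_eqOn_rpow_neg_sub (f := φ) (f' := φ')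
    (by rw [ha]; positivity) hδ₀ (by linarith) (div_pos hξ₀ hγ) hb₀ hbc
    (fun s hs => hφ1 s hs.1 hs.2) (fun s hs => by rw [hφ'1 s hs.1 hs.2]; ring)
  obtain ⟨hint₂, hI₂⟩ := integrableOn_and_integral_eq_of_eqOn_exp_neg_mul (f := φ) (f' := φ') hγ
    (fun s hs => hφ2 s (le_of_lt hs)) (fun s hs => hφ'2 s hs)
  obtain ⟨hint, hsplit⟩ :=
    integrableOn_Ioi_and_integral_eq_Ioo_add_Ioi (div_pos hξ₀ hγ).le hint₁ hint₂
  refine ⟨hint, ?_⟩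
  have hpow : a / γ ^ δ * (ξ / γ) ^ (2 - δ) = a * ξ ^ (2 - δ) / γ ^ 2 := by
    rw [div_mul_comm, div_rpow_div_rpow hξ₀.le hγ, sub_add_cancel, rpow_two]; ring
  rw [hpow, div_right_comm] at hI₁
  rw [hsplit, hI₂, hK0, add_div, show -γ * (ξ / γ) = -ξ by field_simp]
  linarith

theorem stmt4 (n : ℕ) (hn : 3 ≤ n) (ξ δ γ : ℝ)
    (hξ1 : 4 - 4 / (n : ℝ) < ξ) (hξ2 : ξ ≤ 4)
    (hδ : δ ∈ Set.Ioo (0 : ℝ) 1) (hγ : 0 < γ)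
    (a b K0 : ℝ)
    (ha : a = ξ ^ (δ + 1) / δ * Real.exp (-ξ))
    (hb : b = (ξ / δ - 1) * Real.exp (-ξ))
    (hK0 : K0 = a * ξ ^ (2 - δ) / (δ * (2 - δ)) + Real.exp (-ξ))
    (φ φ' : ℝ → ℝ)
    (hφ1 : ∀ s : ℝ, 0 < s → s < ξ / γ → φ s = a / γ ^ δ * s ^ (-δ) - b)
    (hφ2 : ∀ s : ℝ, ξ / γ ≤ s → φ s = Real.exp (-γ * s))
    (hφ'1 : ∀ s : ℝ, 0 < s → s < ξ / γ → φ' s = -(a * δ / γ ^ δ) * s ^ (-(δ + 1)))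
    (hφ'2 : ∀ s : ℝ, ξ / γ < s → φ' s = -γ * Real.exp (-γ * s)) :
    MeasureTheory.IntegrableOn (fun s => (φ s) ^ 2 / |φ' s|) (Set.Ioi 0) ∧
    ∫ s in Set.Ioi (0 : ℝ), (φ s) ^ 2 / |φ' s| ≤ K0 / γ ^ 2 :=
  stmt4_general n hn ξ δ γ hξ1 hδ hγ a b K0 ha hb hK0 φ φ' hφ1 hφ2 hφ'1 hφ'2
end

section
/- Let n ≥ 3 be an integer, ξ ∈ (4−4/n, 4] and γ > 0. Then for every s > ξ/γ one has n² s^{(2n−2)/n} γ² − 4(n²−n) γ s^{(n−2)/n} ≥ (n²ξ − 4(n²−n)) ξ^{(n−2)/n} γ^{2/n}, and the constant (n²ξ − 4(n²−n)) ξ^{(n−2)/n} is positive. -/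
/-!
Put `t = s γ`. Since `(2n - 2)/n = b + 1` and `2/n = 1 - b` with `b = (n - 2)/n`, the right-hand
side equals `(n² t - 4(n² - n)) t^b γ^(2/n)`. For `n ≥ 3` we have `b ≥ 0`, and `ξ > 4 - 4/n`
makes the first factor positive already at `t = ξ`, so this expression is increasing in `t ≥ ξ`;
its value at `t = ξ` is the left-hand side.
-/

open Real

lemma mul_rpow_add_one_sub_mul_rpow {s γ : ℝ} (hs : 0 < s) (hγ : 0 < γ) (A B b : ℝ) :
    A * s ^ (b + 1) * γ ^ 2 - B * γ * s ^ b =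
      (A * (s * γ) - B) * (s * γ) ^ b * γ ^ (1 - b) := by
  have hγb : γ ^ b * γ ^ (1 - b) = γ := by
    rw [← rpow_add hγ, add_sub_cancel, rpow_one]
  rw [mul_rpow hs.le hγ.le, rpow_add_one hs.ne']
  linear_combination (B * s ^ b - A * s ^ b * s * γ) * hγb

lemma sub_mul_rpow_le_sub_mul_rpow {A B b x y : ℝ} (hA : 0 ≤ A) (hb : 0 ≤ b) (hx : 0 ≤ x)
    (hxy : x ≤ y) (hBx : B ≤ A * x) : (A * x - B) * x ^ b ≤ (A * y - B) * y ^ b :=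
  mul_le_mul (by nlinarith) (rpow_le_rpow hx hxy hb) (rpow_nonneg hx b) (by nlinarith)

lemma four_mul_sq_sub_lt_sq_mul {n ξ : ℝ} (hn : 0 < n) (hξ : 4 - 4 / n < ξ) :
    4 * (n ^ 2 - n) < n ^ 2 * ξ := by
  have h := mul_lt_mul_of_pos_left hξ (pow_pos hn 2)
  rw [mul_sub, show n ^ 2 * (4 / n) = 4 * n by field_simp] at h
  linarith

theorem stmt7_general (n : ℕ) (hn : 3 ≤ n) (ξ γ : ℝ)
    (hξ1 : 4 - 4 / (n : ℝ) < ξ) (hγ : 0 < γ) :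
    (∀ s : ℝ, ξ / γ < s →
      ((n : ℝ) ^ 2 * ξ - 4 * ((n : ℝ) ^ 2 - n)) * ξ ^ (((n : ℝ) - 2) / n) * γ ^ ((2 : ℝ) / n) ≤
        (n : ℝ) ^ 2 * s ^ ((2 * (n : ℝ) - 2) / n) * γ ^ 2 -
          4 * ((n : ℝ) ^ 2 - n) * γ * s ^ (((n : ℝ) - 2) / n)) ∧
    0 < ((n : ℝ) ^ 2 * ξ - 4 * ((n : ℝ) ^ 2 - n)) * ξ ^ (((n : ℝ) - 2) / n) := by
  have hn3 : (3 : ℝ) ≤ n := by exact_mod_cast hn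
  have hn0 : (0 : ℝ) < n := by linarith
  have hconst := four_mul_sq_sub_lt_sq_mul hn0 hξ1
  have hξ : 0 < ξ := by
    have : 4 / (n : ℝ) ≤ 4 / 3 := div_le_div_of_nonneg_left (by norm_num) (by norm_num) hn3
    linarith
  refine ⟨fun s hs => ?_, mul_pos (sub_pos.mpr hconst) (rpow_pos_of_pos hξ _)⟩
  have hs0 : 0 < s := (div_pos hξ hγ).trans hs
  have hξs : ξ ≤ s * γ := ((div_lt_iff₀ hγ).mp hs).le
  have hexp : (2 * (n : ℝ) - 2) / n = ((n : ℝ) - 2) / n + 1 := by field_simp; ring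
  have hexp' : (2 : ℝ) / n = 1 - ((n : ℝ) - 2) / n := by field_simp; ring
  rw [hexp, mul_rpow_add_one_sub_mul_rpow hs0 hγ, hexp']
  have hb : 0 ≤ ((n : ℝ) - 2) / n := div_nonneg (by linarith) hn0.le
  exact mul_le_mul_of_nonneg_right
    (sub_mul_rpow_le_sub_mul_rpow (by positivity) hb hξ.le hξs hconst.le) (rpow_nonneg hγ.le _)

theorem stmt7 (n : ℕ) (hn : 3 ≤ n) (ξ γ : ℝ)
    (hξ1 : 4 - 4 / (n : ℝ) < ξ) (hξ2 : ξ ≤ 4) (hγ : 0 < γ) :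
    (∀ s : ℝ, ξ / γ < s →
      ((n : ℝ) ^ 2 * ξ - 4 * ((n : ℝ) ^ 2 - n)) * ξ ^ (((n : ℝ) - 2) / n) * γ ^ ((2 : ℝ) / n) ≤
        (n : ℝ) ^ 2 * s ^ ((2 * (n : ℝ) - 2) / n) * γ ^ 2 -
          4 * ((n : ℝ) ^ 2 - n) * γ * s ^ (((n : ℝ) - 2) / n)) ∧
    0 < ((n : ℝ) ^ 2 * ξ - 4 * ((n : ℝ) ^ 2 - n)) * ξ ^ (((n : ℝ) - 2) / n) :=
  stmt7_general n hn ξ γ hξ1 hγ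
end

section
/- Assume additionally that ξ ≥ 1 and γ ≥ ξ/(R−ρ)^n. Then for every s ≥ ξ/γ one has γ F(s) ≥ F′(s), where F′(s) = f(s^{1/n})/n is the derivative of F. Equivalently, n γ F(s) − n F′(s) ≥ 0 for all s ≥ ξ/γ. -/
/-!
Write `t = s ^ (1 / n)`, so that `t ^ n = s`. Since `f` is nonincreasing,
`F s = ∫₀ᵗ f r r ^ (n - 1) dr ≥ f t ∫₀ᵗ r ^ (n - 1) dr = f t s / n`, and `γ s ≥ ξ ≥ 1` gives
`γ F s ≥ f t / n`. The integrand is integrable at `0` because `f r r ^ (n - 1) = f0 r ^ (n - 1 - α)`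
there with `α < n`, and away from `0` because monotone functions are integrable.
-/

open MeasureTheory Set

theorem mul_integral_le_integral_mul_of_antitoneOn {g w : ℝ → ℝ} {t : ℝ} (ht : 0 ≤ t)
    (hg : AntitoneOn g (Ioc 0 t)) (hw : ∀ r ∈ Ioo 0 t, 0 ≤ w r)
    (hw_int : IntervalIntegrable w volume 0 t)
    (hgw_int : IntervalIntegrable (fun r => g r * w r) volume 0 t) :
    g t * ∫ r in 0..t, w r ≤ ∫ r in 0..t, g r * w r := by
  rw [← intervalIntegral.integral_const_mul]
  refine intervalIntegral.integral_mono_on_of_le_Ioo ht (hw_int.const_mul _) hgw_int fun r hr => ?_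
  have hr_mem : r ∈ Ioc 0 t := Ioo_subset_Ioc_self hr
  have ht_mem : t ∈ Ioc 0 t := ⟨hr.1.trans hr.2, le_rfl⟩
  exact mul_le_mul_of_nonneg_right (hg hr_mem ht_mem hr.2.le) (hw r hr)

theorem mul_pow_div_le_integral_mul_pow_of_antitoneOn {g : ℝ → ℝ} {t : ℝ} {n : ℕ} (hn : 0 < n)
    (ht : 0 ≤ t) (hg : AntitoneOn g (Ioc 0 t))
    (hg_int : IntervalIntegrable (fun r => g r * r ^ (n - 1)) volume 0 t) :
    g t * (t ^ n / n) ≤ ∫ r in 0..t, g r * r ^ (n - 1) := by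
  have hsucc : n - 1 + 1 = n := Nat.sub_add_cancel hn
  have h := mul_integral_le_integral_mul_of_antitoneOn ht hg (fun r hr => pow_nonneg hr.1.le _)
    (intervalIntegral.intervalIntegrable_pow (n - 1)) hg_int
  rwa [integral_pow, hsucc, zero_pow hn.ne', sub_zero, Nat.cast_sub hn, Nat.cast_one,
    sub_add_cancel] at h

theorem intervalIntegrable_rpow_neg_mul_pow {α c : ℝ} {n : ℕ} (hn : 0 < n) (hα : α < n)
    (hc : 0 ≤ c) : IntervalIntegrable (fun r : ℝ => r ^ (-α) * r ^ (n - 1)) volume 0 c := by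
  have hexp : (-1 : ℝ) < n - 1 - α := by linarith
  refine (intervalIntegral.intervalIntegrable_rpow' hexp).congr fun r hr => ?_
  rw [uIoc_of_le hc] at hr
  rw [← Real.rpow_natCast, ← Real.rpow_add hr.1, Nat.cast_sub hn, Nat.cast_one]
  ring_nf

theorem intervalIntegrable_mul_pow_of_antitoneOn {f : ℝ → ℝ} {f0 α c b : ℝ} {n : ℕ} (hn : 0 < n)
    (hα : α < n) (hc : 0 < c) (hb : 0 < b) (hf_anti : AntitoneOn f (Ioi 0))
    (hf_eq : ∀ r, 0 < r → r ≤ c → f r = f0 * r ^ (-α)) :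
    IntervalIntegrable (fun r => f r * r ^ (n - 1)) volume 0 b := by
  have near_zero : IntervalIntegrable (fun r => f r * r ^ (n - 1)) volume 0 c := by
    refine ((intervalIntegrable_rpow_neg_mul_pow hn hα hc.le).const_mul f0).congr fun r hr => ?_
    rw [uIoc_of_le hc.le] at hr
    simp only [hf_eq r hr.1 hr.2, mul_assoc]
  have away_from_zero : IntervalIntegrable (fun r => f r * r ^ (n - 1)) volume c b := by
    have hsub : uIcc c b ⊆ Ioi 0 := fun r hr => lt_of_lt_of_le (lt_min hc hb) hr.1
    exact (hf_anti.mono hsub).intervalIntegrable.mul_continuousOn (continuous_pow _).continuousOn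
  exact near_zero.trans away_from_zero

theorem stmt8_general (n : ℕ) (hn : 3 ≤ n) (R ρ α f0 : ℝ)
    (hR : R ∈ Set.Ioo (0 : ℝ) 1) (hρ : ρ ∈ Set.Ioo (0 : ℝ) (R / 2))
    (hα : α ∈ Set.Ioo (2 : ℝ) n)
    (f : ℝ → ℝ)
    (hf_nonneg : ∀ r : ℝ, 0 < r → 0 ≤ f r)
    (hf_anti : AntitoneOn f (Set.Ioi 0))
    (hf_eq : ∀ r : ℝ, 0 < r → r ≤ R - ρ → f r = f0 * r ^ (-α))
    (F : ℝ → ℝ)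
    (hF : ∀ s : ℝ, 0 ≤ s → F s = ∫ r in (0 : ℝ)..(s ^ ((1 : ℝ) / n)), f r * r ^ (n - 1))
    (ξ γ : ℝ) (hξ : 1 ≤ ξ) (hγ : ξ / (R - ρ) ^ n ≤ γ) :
    ∀ s : ℝ, ξ / γ ≤ s → f (s ^ ((1 : ℝ) / n)) / n ≤ γ * F s := by
  intro s hs
  have hn0 : 0 < n := by omega
  have hRρ : 0 < R - ρ := by linarith [hR.1, hρ.2]
  have hγ0 : 0 < γ := lt_of_lt_of_le (by positivity) hγ
  have hs0 : 0 < s := lt_of_lt_of_le (by positivity) hs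
  set t := s ^ ((1 : ℝ) / n) with ht
  have ht0 : 0 < t := by positivity
  have htn : t ^ n = s := by rw [ht, one_div]; exact Real.rpow_inv_natCast_pow hs0.le hn0.ne'
  have hF_lower : f t * (s / n) ≤ F s := by
    have h := mul_pow_div_le_integral_mul_pow_of_antitoneOn hn0 ht0.le
      (hf_anti.mono Ioc_subset_Ioi_self)
      (intervalIntegrable_mul_pow_of_antitoneOn hn0 hα.2 hRρ ht0 hf_anti hf_eq)
    rwa [htn, ← hF s hs0.le] at h
  have hγs : 1 ≤ γ * s := hξ.trans ((div_le_iff₀' hγ0).mp hs)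
  calc f t / n ≤ γ * s * f t / n := by
        gcongr; exact le_mul_of_one_le_left (hf_nonneg t ht0) hγs
    _ = γ * (f t * (s / n)) := by ring
    _ ≤ γ * F s := by gcongr

theorem stmt8 (n : ℕ) (hn : 3 ≤ n) (R ρ α f0 : ℝ)
    (hR : R ∈ Set.Ioo (0 : ℝ) 1) (hρ : ρ ∈ Set.Ioo (0 : ℝ) (R / 2))
    (hα : α ∈ Set.Ioo (2 : ℝ) n) (hf0 : 0 < f0)
    (f : ℝ → ℝ) (hf_smooth : ContDiffOn ℝ 1 f (Set.Ioi 0))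
    (hf_nonneg : ∀ r : ℝ, 0 < r → 0 ≤ f r)
    (hf_anti : AntitoneOn f (Set.Ioi 0))
    (hf_eq : ∀ r : ℝ, 0 < r → r ≤ R - ρ → f r = f0 * r ^ (-α))
    (hf_zero : ∀ r : ℝ, R + ρ ≤ r → f r = 0)
    (F : ℝ → ℝ)
    (hF : ∀ s : ℝ, 0 ≤ s → F s = ∫ r in (0 : ℝ)..(s ^ ((1 : ℝ) / n)), f r * r ^ (n - 1))
    (ξ γ : ℝ) (hξ : 1 ≤ ξ) (hγ : ξ / (R - ρ) ^ n ≤ γ) :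
    ∀ s : ℝ, ξ / γ ≤ s → f (s ^ ((1 : ℝ) / n)) / n ≤ γ * F s :=
  stmt8_general n hn R ρ α f0 hR hρ hα f hf_nonneg hf_anti hf_eq F hF ξ γ hξ hγ
end

section
/- Let n ≥ 3 be an integer, let α, f0 be real numbers with 2 < α < n and f0 > 0, let ξ ∈ (4−4/n, 4], let γ > ξ, and let δ ∈ (0,1) satisfy δ > (n−α)/n and n²δ² + (n f0/(n−α) − 3n² + 4n) δ − f0 > 0. Set a := (ξ^{δ+1}/δ)e^{−ξ}, b := (ξ/δ − 1)e^{−ξ} and c2 := (n²δ² + (n f0/(n−α) − 3n² + 4n) δ − f0) ξ^{−2/n}. Then for every s with 0 < s < ξ/γ one has n² s^{(2n−2)/n} · (aδ(δ+1)/γ^δ) s^{−(δ+2)} − 4(n²−n) s^{(n−2)/n} · (aδ/γ^δ) s^{−(δ+1)} + (n f0/(n−α)) s^{(n−α)/n} · (aδ/γ^δ) s^{−(δ+1)} − f0 s^{−α/n} ((a/γ^δ) s^{−δ} − b) ≥ c2 γ^{2/n} ((a/γ^δ) s^{−δ} − b). -/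
set_option maxHeartbeats 1000000 in
theorem stmt9 (n : ℕ) (hn : 3 ≤ n) (α f0 ξ γ δ : ℝ)
    (hα2 : 2 < α) (hαn : α < n) (hf0 : 0 < f0)
    (hξ1 : 4 - 4 / (n : ℝ) < ξ) (hξ2 : ξ ≤ 4) (hγ : ξ < γ)
    (hδ : δ ∈ Set.Ioo (0 : ℝ) 1) (hδ1 : ((n : ℝ) - α) / n < δ)
    (hδ2 : 0 < (n : ℝ) ^ 2 * δ ^ 2 +
      ((n : ℝ) * f0 / ((n : ℝ) - α) - 3 * (n : ℝ) ^ 2 + 4 * n) * δ - f0)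
    (a b c2 : ℝ)
    (ha : a = ξ ^ (δ + 1) / δ * Real.exp (-ξ))
    (hb : b = (ξ / δ - 1) * Real.exp (-ξ))
    (hc2 : c2 = ((n : ℝ) ^ 2 * δ ^ 2 +
      ((n : ℝ) * f0 / ((n : ℝ) - α) - 3 * (n : ℝ) ^ 2 + 4 * n) * δ - f0) * ξ ^ (-(2 : ℝ) / n)) :
    ∀ s : ℝ, 0 < s → s < ξ / γ →
      c2 * γ ^ ((2 : ℝ) / n) * (a / γ ^ δ * s ^ (-δ) - b) ≤
        (n : ℝ) ^ 2 * s ^ ((2 * (n : ℝ) - 2) / n) * (a * δ * (δ + 1) / γ ^ δ) * s ^ (-(δ + 2))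
          - 4 * ((n : ℝ) ^ 2 - n) * s ^ (((n : ℝ) - 2) / n) * (a * δ / γ ^ δ) * s ^ (-(δ + 1))
          + ((n : ℝ) * f0 / ((n : ℝ) - α)) * s ^ (((n : ℝ) - α) / n) * (a * δ / γ ^ δ) * s ^ (-(δ + 1))
          - f0 * s ^ (-α / (n : ℝ)) * (a / γ ^ δ * s ^ (-δ) - b) := by
  obtain ⟨hδ0, hδlt1⟩ := hδ
  intro s hs hsξγ
  have hn' : (3:ℝ) ≤ (n:ℝ) := by exact_mod_cast hn
  have hnpos : (0:ℝ) < (n:ℝ) := by linarith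
  have hnne : (n:ℝ) ≠ 0 := ne_of_gt hnpos
  have h4n : (4:ℝ)/(n:ℝ) ≤ 4/3 := by
    rw [div_le_div_iff₀ hnpos (by norm_num)]; linarith
  have hξ1' : (1:ℝ) < ξ := by linarith
  have hξpos : (0:ℝ) < ξ := by linarith
  have hγpos : (0:ℝ) < γ := lt_trans hξpos hγ
  have hnα : (0:ℝ) < (n:ℝ) - α := by linarith
  have hs1 : s < 1 := lt_trans hsξγ ((div_lt_one hγpos).mpr hγ)
  have hapos : 0 < a := by rw [ha]; positivity
  have hbpos : 0 < b := by
    rw [hb]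
    have h1 : 1 < ξ / δ := (one_lt_div hδ0).mpr (by linarith)
    have h2 := Real.exp_pos (-ξ)
    nlinarith
  have hγδpos : (0:ℝ) < γ ^ δ := Real.rpow_pos_of_pos hγpos δ
  have hApos : 0 < a / γ ^ δ := div_pos hapos hγδpos
  have hZpos : 0 < s ^ (-α/(n:ℝ)) := Real.rpow_pos_of_pos hs _
  have hwpos : 0 < s ^ (-δ) := Real.rpow_pos_of_pos hs _
  -- rpow product identities
  have h1 : s ^ ((2*(n:ℝ)-2)/(n:ℝ)) * s ^ (-(δ+2)) = s ^ (-(2:ℝ)/(n:ℝ) + -δ) := by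
    rw [← Real.rpow_add hs]; congr 1; field_simp; ring
  have h2 : s ^ (((n:ℝ)-2)/(n:ℝ)) * s ^ (-(δ+1)) = s ^ (-(2:ℝ)/(n:ℝ) + -δ) := by
    rw [← Real.rpow_add hs]; congr 1; field_simp; ring
  have h3 : s ^ (((n:ℝ)-α)/(n:ℝ)) * s ^ (-(δ+1)) = s ^ (-α/(n:ℝ) + -δ) := by
    rw [← Real.rpow_add hs]; congr 1; field_simp; ring
  have h4 : s ^ (-α/(n:ℝ)) * s ^ (-δ) = s ^ (-α/(n:ℝ) + -δ) := by
    rw [← Real.rpow_add hs]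
  -- X ≤ Y
  have hXY : s ^ (-(2:ℝ)/(n:ℝ) + -δ) ≤ s ^ (-α/(n:ℝ) + -δ) := by
    apply Real.rpow_le_rpow_of_exponent_ge hs hs1.le
    have h2 : (2:ℝ)/(n:ℝ) ≤ α/(n:ℝ) := by gcongr
    have e1 : -(2:ℝ)/(n:ℝ) = -((2:ℝ)/(n:ℝ)) := by ring
    have e2 : -α/(n:ℝ) = -(α/(n:ℝ)) := by ring
    rw [e1, e2]; linarith
  -- lower bound for X
  have hKW : γ ^ ((2:ℝ)/(n:ℝ)) * ξ ^ (-(2:ℝ)/(n:ℝ)) * s ^ (-δ) ≤ s ^ (-(2:ℝ)/(n:ℝ) + -δ) := by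
    have hb1 : (ξ/γ) ^ (-(2:ℝ)/(n:ℝ)) ≤ s ^ (-(2:ℝ)/(n:ℝ)) := by
      apply Real.rpow_le_rpow_of_nonpos hs hsξγ.le
      apply div_nonpos_of_nonpos_of_nonneg (by norm_num) hnpos.le
    have hb2 : (ξ/γ) ^ (-(2:ℝ)/(n:ℝ)) = γ ^ ((2:ℝ)/(n:ℝ)) * ξ ^ (-(2:ℝ)/(n:ℝ)) := by
      have hγ2 : (0:ℝ) < γ ^ ((2:ℝ)/(n:ℝ)) := Real.rpow_pos_of_pos hγpos _
      have hξ2' : (0:ℝ) < ξ ^ ((2:ℝ)/(n:ℝ)) := Real.rpow_pos_of_pos hξpos _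
      rw [Real.div_rpow hξpos.le hγpos.le, neg_div, Real.rpow_neg hγpos.le,
        Real.rpow_neg hξpos.le]
      field_simp
    calc γ ^ ((2:ℝ)/(n:ℝ)) * ξ ^ (-(2:ℝ)/(n:ℝ)) * s ^ (-δ)
        = (ξ/γ) ^ (-(2:ℝ)/(n:ℝ)) * s ^ (-δ) := by rw [hb2]
      _ ≤ s ^ (-(2:ℝ)/(n:ℝ)) * s ^ (-δ) := by
          exact mul_le_mul_of_nonneg_right hb1 hwpos.le
      _ = s ^ (-(2:ℝ)/(n:ℝ) + -δ) := by rw [← Real.rpow_add hs]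
  -- D2 ≥ 0
  have hD2 : 0 ≤ (n:ℝ)*f0/((n:ℝ)-α)*δ - f0 := by
    have hδ1' : (n:ℝ) - α < δ * (n:ℝ) := (div_lt_iff₀ hnpos).mp hδ1
    rw [sub_nonneg, div_mul_eq_mul_div, le_div_iff₀ hnα]
    nlinarith [mul_lt_mul_of_pos_left hδ1' hf0]
  -- rewrite the big expression
  have hE : (n : ℝ) ^ 2 * s ^ ((2 * (n : ℝ) - 2) / n) * (a * δ * (δ + 1) / γ ^ δ) * s ^ (-(δ + 2))
          - 4 * ((n : ℝ) ^ 2 - n) * s ^ (((n : ℝ) - 2) / n) * (a * δ / γ ^ δ) * s ^ (-(δ + 1))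
          + ((n : ℝ) * f0 / ((n : ℝ) - α)) * s ^ (((n : ℝ) - α) / n) * (a * δ / γ ^ δ) * s ^ (-(δ + 1))
          - f0 * s ^ (-α / (n : ℝ)) * (a / γ ^ δ * s ^ (-δ) - b)
      = a / γ ^ δ * ((n:ℝ)^2*δ^2 + (-3*(n:ℝ)^2+4*(n:ℝ))*δ) * s ^ (-(2:ℝ)/(n:ℝ) + -δ)
        + a / γ ^ δ * ((n:ℝ)*f0/((n:ℝ)-α)*δ - f0) * s ^ (-α/(n:ℝ) + -δ)
        + f0 * b * s ^ (-α/(n:ℝ)) := by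
    linear_combination ((n:ℝ)^2*(a*δ*(δ+1)/γ^δ)) * h1
      - (4*((n:ℝ)^2-(n:ℝ))*(a*δ/γ^δ)) * h2
      + ((n:ℝ)*f0/((n:ℝ)-α)*(a*δ/γ^δ)) * h3
      - (f0*(a/γ^δ)) * h4
  rw [hE, hc2]
  -- main estimates
  have step2 : (a / γ ^ δ * ((n : ℝ) ^ 2 * δ ^ 2 +
        ((n : ℝ) * f0 / ((n : ℝ) - α) - 3 * (n : ℝ) ^ 2 + 4 * n) * δ - f0))
        * (γ ^ ((2:ℝ)/(n:ℝ)) * ξ ^ (-(2:ℝ)/(n:ℝ)) * s ^ (-δ))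
      ≤ (a / γ ^ δ * ((n : ℝ) ^ 2 * δ ^ 2 +
        ((n : ℝ) * f0 / ((n : ℝ) - α) - 3 * (n : ℝ) ^ 2 + 4 * n) * δ - f0))
        * s ^ (-(2:ℝ)/(n:ℝ) + -δ) :=
    mul_le_mul_of_nonneg_left hKW (mul_nonneg hApos.le hδ2.le)
  have step1 : (a / γ ^ δ * ((n:ℝ)*f0/((n:ℝ)-α)*δ - f0)) * s ^ (-(2:ℝ)/(n:ℝ) + -δ)
      ≤ (a / γ ^ δ * ((n:ℝ)*f0/((n:ℝ)-α)*δ - f0)) * s ^ (-α/(n:ℝ) + -δ) :=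
    mul_le_mul_of_nonneg_left hXY (mul_nonneg hApos.le hD2)
  have hCKb : 0 ≤ ((n : ℝ) ^ 2 * δ ^ 2 +
        ((n : ℝ) * f0 / ((n : ℝ) - α) - 3 * (n : ℝ) ^ 2 + 4 * n) * δ - f0)
        * (ξ ^ (-(2:ℝ)/(n:ℝ)) * γ ^ ((2:ℝ)/(n:ℝ))) * b :=
    mul_nonneg (mul_nonneg hδ2.le (by positivity)) hbpos.le
  have hfbZ : 0 ≤ f0 * b * s ^ (-α/(n:ℝ)) :=
    mul_nonneg (mul_nonneg hf0.le hbpos.le) hZpos.le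
  linarith [step1, step2, hCKb, hfbZ]
end

section
/- Suppose Φ : ℝ → ℝ is nondecreasing and locally Lipschitz, and that for some t1 ∈ ℝ, T > 0 and c ∈ ℝ we are given a continuous function y : [t1, t1+T) → ℝ and a continuously differentiable function z : [t1, t1+T) → ℝ such that y(t) ≥ c + ∫_{t1}^t Φ(y(τ)) dτ for all t ∈ (t1, t1+T), and z′(t) = Φ(z(t)) for all t ∈ (t1, t1+T) with z(t1) = c. Then y(t) ≥ z(t) for all t ∈ (t1, t1+T). -/
open Set Metric intervalIntegral MeasureTheory

lemma lip_on_compact {f : ℝ → ℝ} (hf : LocallyLipschitz f) {s : Set ℝ} (hs : IsCompact s) :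
    ∃ K : ℝ, 0 ≤ K ∧ ∀ a ∈ s, ∀ b ∈ s, |f a - f b| ≤ K * |a - b| := by
  have hfc : Continuous f := hf.continuous
  choose Kf tf htf hlip using hf
  choose ε hε hball using fun x => Metric.mem_nhds_iff.1 (htf x)
  rcases s.eq_empty_or_nonempty with rfl | ⟨a0, ha0⟩
  · exact ⟨0, le_refl 0, by simp⟩
  obtain ⟨b', hb's, hb'fin, hcov⟩ := hs.elim_finite_subcover_image
    (b := s) (c := fun x => ball x (ε x / 2)) (fun i _ => isOpen_ball)
    (fun x hx => mem_iUnion₂.2 ⟨x, hx, mem_ball_self (half_pos (hε x))⟩)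
  obtain ⟨C, hC'⟩ := hs.exists_bound_of_continuousOn hfc.continuousOn
  have hC : ∀ x ∈ s, |f x| ≤ C := fun x hx => by simpa [Real.norm_eq_abs] using hC' x hx
  have hC0 : (0:ℝ) ≤ C := le_trans (abs_nonneg _) (hC a0 ha0)
  obtain ⟨i0, hi0, _⟩ := mem_iUnion₂.1 (hcov ha0)
  have hne : hb'fin.toFinset.Nonempty := ⟨i0, hb'fin.mem_toFinset.2 hi0⟩
  set r : ℝ := hb'fin.toFinset.inf' hne (fun i => ε i / 2) with hr
  have hr0 : 0 < r := by
    rw [hr, Finset.lt_inf'_iff]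
    exact fun i _ => half_pos (hε i)
  set Km : NNReal := hb'fin.toFinset.sup Kf with hKm
  refine ⟨max (Km : ℝ) (2 * C / r), le_max_of_le_right (by positivity), fun a ha b hb => ?_⟩
  rcases lt_or_ge (dist a b) r with hab | hab
  · obtain ⟨i, hi, hai⟩ := mem_iUnion₂.1 (hcov ha)
    have hiF : i ∈ hb'fin.toFinset := hb'fin.mem_toFinset.2 hi
    have hri : r ≤ ε i / 2 := Finset.inf'_le _ hiF
    have hbi : b ∈ ball i (ε i) := by
      have : dist b i ≤ dist b a + dist a i := dist_triangle b a i
      have := this.trans_lt (by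
        rw [dist_comm b a]
        calc dist a b + dist a i < r + ε i / 2 := add_lt_add hab hai
          _ ≤ ε i / 2 + ε i / 2 := by linarith
          _ = ε i := by ring)
      exact this
    have hai' : a ∈ ball i (ε i) := ball_subset_ball (by linarith [hε i]) hai
    have := (hlip i).dist_le_mul a (hball i hai') b (hball i hbi)
    rw [Real.dist_eq, Real.dist_eq] at this
    refine this.trans (mul_le_mul_of_nonneg_right ?_ (abs_nonneg _))
    exact le_max_of_le_left (NNReal.coe_le_coe.2 (Finset.le_sup hiF))
  · have h1 : |f a - f b| ≤ 2 * C := by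
      calc |f a - f b| ≤ |f a| + |f b| := abs_sub _ _
        _ ≤ C + C := add_le_add (hC a ha) (hC b hb)
        _ = 2 * C := by ring
    rw [Real.dist_eq] at hab
    calc |f a - f b| ≤ 2 * C := h1
      _ = (2 * C / r) * r := by field_simp
      _ ≤ (2 * C / r) * |a - b| := by
          apply mul_le_mul_of_nonneg_left hab (by positivity)
      _ ≤ max (Km : ℝ) (2 * C / r) * |a - b| :=
          mul_le_mul_of_nonneg_right (le_max_right _ _) (abs_nonneg _)

theorem stmt10 (Φ : ℝ → ℝ) (hΦmono : Monotone Φ) (hΦlip : LocallyLipschitz Φ)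
    (t1 T c : ℝ) (hT : 0 < T) (y z : ℝ → ℝ)
    (hy_cont : ContinuousOn y (Set.Ico t1 (t1 + T)))
    (hy : ∀ t ∈ Set.Ioo t1 (t1 + T), c + ∫ τ in t1..t, Φ (y τ) ≤ y t)
    (hz_cont : ContinuousOn z (Set.Ico t1 (t1 + T)))
    (hz : ∀ t ∈ Set.Ioo t1 (t1 + T), HasDerivAt z (Φ (z t)) t)
    (hz1 : z t1 = c) :
    ∀ t ∈ Set.Ioo t1 (t1 + T), z t ≤ y t := by
  have hΦc : Continuous Φ := hΦlip.continuous
  intro t ht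
  obtain ⟨ht1, ht2⟩ := ht
  have hsub : Icc t1 t ⊆ Ico t1 (t1 + T) := fun x hx => ⟨hx.1, lt_of_le_of_lt hx.2 ht2⟩
  -- the Ico is a neighborhood of x within Ici x, for x in Ico
  have hmem_nhds : ∀ x ∈ Ico t1 (t1 + T), Ico t1 (t1 + T) ∈ nhdsWithin x (Ici x) := by
    intro x hx
    apply mem_nhdsWithin.2 ⟨Iio (t1 + T), isOpen_Iio, hx.2, ?_⟩
    rintro u ⟨hu1, hu2⟩
    exact ⟨le_trans hx.1 hu2, hu1⟩
  -- integrability of Φ ∘ z and Φ ∘ y on subintervals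
  have hint_z : ∀ x ∈ Ico t1 (t1 + T), IntervalIntegrable (fun τ => Φ (z τ)) volume t1 x := by
    intro x hx
    apply ContinuousOn.intervalIntegrable
    rw [uIcc_of_le hx.1]
    exact hΦc.comp_continuousOn (hz_cont.mono (fun u hu => ⟨hu.1, lt_of_le_of_lt hu.2 hx.2⟩))
  have hint_y : ∀ x ∈ Ico t1 (t1 + T), IntervalIntegrable (fun τ => Φ (y τ)) volume t1 x := by
    intro x hx
    apply ContinuousOn.intervalIntegrable
    rw [uIcc_of_le hx.1]
    exact hΦc.comp_continuousOn (hy_cont.mono (fun u hu => ⟨hu.1, lt_of_le_of_lt hu.2 hx.2⟩))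
  -- integral representation of z
  have hzrep : ∀ x ∈ Ico t1 (t1 + T), z x = c + ∫ τ in t1..x, Φ (z τ) := by
    intro x hx
    rcases eq_or_lt_of_le hx.1 with rfl | hx1
    · simp [hz1]
    have := intervalIntegral.integral_eq_sub_of_hasDeriv_right_of_le hx.1
      (hz_cont.mono (fun u hu => ⟨hu.1, lt_of_le_of_lt hu.2 hx.2⟩))
      (f' := fun τ => Φ (z τ))
      (fun s hs => (hz s ⟨hs.1, hs.2.trans hx.2⟩).hasDerivWithinAt)
      (hint_z x hx)
    rw [hz1] at this
    linarith [this]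
  -- the function w
  set w : ℝ → ℝ := fun x => c + ∫ τ in t1..x, Φ (y τ) with hw
  have hwt1 : w t1 = c := by simp [hw]
  have hw_cont : ContinuousOn w (Icc t1 t) := by
    apply continuousOn_const.add
    have hI : MeasureTheory.IntegrableOn (fun τ => Φ (y τ)) (uIcc t1 t) volume := by
      rw [uIcc_of_le ht1.le]
      exact (hΦc.comp_continuousOn (hy_cont.mono hsub)).integrableOn_Icc
    have := intervalIntegral.continuousOn_primitive_interval (a := t1) (b := t) hI
    rwa [uIcc_of_le ht1.le] at this
  -- right derivatives
  have hw' : ∀ x ∈ Ico t1 t, HasDerivWithinAt w (Φ (y x)) (Ici x) x := by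
    intro x hx
    have hx' : x ∈ Ico t1 (t1 + T) := ⟨hx.1, hx.2.trans ht2⟩
    have hmem' : Ico t1 (t1 + T) ∈ nhdsWithin x (Ioi x) :=
      (nhdsWithin_mono x Ioi_subset_Ici_self) (hmem_nhds x hx')
    have hFTC := intervalIntegral.integral_hasDerivWithinAt_right (hint_y x hx')
      (s := Ici x) (t := Ioi x)
      ⟨Ico t1 (t1 + T), hmem',
        ((hΦc.comp_continuousOn hy_cont).aestronglyMeasurable measurableSet_Ico)⟩
      (((hΦc.comp_continuousOn hy_cont) x hx').mono_of_mem_nhdsWithin hmem')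
    exact hFTC.const_add c
  have hz' : ∀ x ∈ Ico t1 t, HasDerivWithinAt z (Φ (z x)) (Ici x) x := by
    intro x hx
    have hx' : x ∈ Ico t1 (t1 + T) := ⟨hx.1, hx.2.trans ht2⟩
    have hmem' : Ico t1 (t1 + T) ∈ nhdsWithin x (Ioi x) :=
      (nhdsWithin_mono x Ioi_subset_Ici_self) (hmem_nhds x hx')
    have hFTC := intervalIntegral.integral_hasDerivWithinAt_right (hint_z x hx')
      (s := Ici x) (t := Ioi x)
      ⟨Ico t1 (t1 + T), hmem',
        ((hΦc.comp_continuousOn hz_cont).aestronglyMeasurable measurableSet_Ico)⟩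
      (((hΦc.comp_continuousOn hz_cont) x hx').mono_of_mem_nhdsWithin hmem')
    have hFTC' := hFTC.const_add c
    apply hFTC'.congr_of_eventuallyEq
    · exact Filter.eventuallyEq_of_mem (hmem_nhds x hx') (fun u hu => hzrep u hu)
    · exact hzrep x hx'
  -- Lipschitz constant on the range
  have hzc : ContinuousOn z (Icc t1 t) := hz_cont.mono hsub
  have hSz : IsCompact (z '' Icc t1 t) := isCompact_Icc.image_of_continuousOn hzc
  have hSw : IsCompact (w '' Icc t1 t) := isCompact_Icc.image_of_continuousOn hw_cont
  obtain ⟨K, hK0, hKlip⟩ := lip_on_compact hΦlip (hSz.union hSw)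
  -- barrier argument
  have key : ∀ ε > 0, z t ≤ w t + ε * Real.exp ((K + 1) * (t - t1)) := by
    intro ε hε
    have main := image_le_of_deriv_right_lt_deriv_boundary' (f := z)
      (f' := fun x => Φ (z x)) (a := t1) (b := t) hzc hz'
      (B := fun x => w x + ε * Real.exp ((K + 1) * (x - t1)))
      (B' := fun x => Φ (y x) + ε * (Real.exp ((K + 1) * (x - t1)) * (K + 1)))
      (by
        show z t1 ≤ w t1 + ε * Real.exp ((K + 1) * (t1 - t1))
        rw [hz1, hwt1, sub_self, mul_zero, Real.exp_zero, mul_one]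
        linarith)
      (hw_cont.add (Continuous.continuousOn
        (continuous_const.mul (Real.continuous_exp.comp
          (continuous_const.mul (continuous_id.sub continuous_const))))))
      (by
        intro x hx
        have h1 : HasDerivAt (fun u : ℝ => (K + 1) * (u - t1)) (K + 1) x := by
          simpa using ((hasDerivAt_id x).sub_const t1).const_mul (K + 1)
        have h2 := (Real.hasDerivAt_exp ((K + 1) * (x - t1))).comp x h1
        exact (hw' x hx).add ((h2.const_mul ε).hasDerivWithinAt))
      (by
        intro x hx hxe
        have hexp : (0:ℝ) < Real.exp ((K + 1) * (x - t1)) := Real.exp_pos _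
        rcases eq_or_lt_of_le hx.1 with rfl | hx1
        · exfalso
          have hxe' : z t1 = w t1 + ε * Real.exp ((K + 1) * (t1 - t1)) := hxe
          rw [hz1, hwt1, sub_self, mul_zero, Real.exp_zero, mul_one] at hxe'
          linarith
        · have hxe' : z x = w x + ε * Real.exp ((K + 1) * (x - t1)) := hxe
          have hxI : x ∈ Ioo t1 (t1 + T) := ⟨hx1, hx.2.trans ht2⟩
          have hwyx : w x ≤ y x := hy x hxI
          have hE0 : 0 < ε * Real.exp ((K + 1) * (x - t1)) := by positivity
          have hzS : z x ∈ z '' Icc t1 t ∪ w '' Icc t1 t :=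
            Or.inl ⟨x, ⟨hx.1, hx.2.le⟩, rfl⟩
          have hwS : w x ∈ z '' Icc t1 t ∪ w '' Icc t1 t :=
            Or.inr ⟨x, ⟨hx.1, hx.2.le⟩, rfl⟩
          have hl := hKlip _ hzS _ hwS
          have hd : z x - w x = ε * Real.exp ((K + 1) * (x - t1)) := by
            rw [hxe']; ring
          rw [hd, abs_of_pos hE0] at hl
          have h1 : Φ (z x) - Φ (w x) ≤ K * (ε * Real.exp ((K + 1) * (x - t1))) :=
            le_trans (le_abs_self _) hl
          have h2 : Φ (w x) ≤ Φ (y x) := hΦmono hwyx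
          have h3 : K * (ε * Real.exp ((K + 1) * (x - t1)))
              < ε * (Real.exp ((K + 1) * (x - t1)) * (K + 1)) := by nlinarith
          show Φ (z x) < Φ (y x) + ε * (Real.exp ((K + 1) * (x - t1)) * (K + 1))
          linarith)
    exact main (right_mem_Icc.2 ht1.le)
  have hzw : z t ≤ w t := by
    have hexp : (0:ℝ) < Real.exp ((K + 1) * (t - t1)) := Real.exp_pos _
    refine le_of_forall_pos_le_add (fun δ hδ => ?_)
    have hk := key (δ / Real.exp ((K + 1) * (t - t1))) (by positivity)
    rw [div_mul_cancel₀ _ hexp.ne'] at hk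
    linarith
  exact hzw.trans (hy t ⟨ht1, ht2⟩)
end

section
/- Let A > 0, B > 0, c > 0, t1 ∈ ℝ and T′ > 0. Suppose y : [t1, t1+T′) → ℝ is continuous and satisfies y(t) ≥ c + ∫_{t1}^t (A y(τ) + B y(τ)²) dτ for all t ∈ (t1, t1+T′). Then T′ ≤ (1/A) log(1 + A/(B c)). -/
/-!
Write `z t = c + ∫_{t₁}^t (A y + B y²)`, so that `z ≤ y`, `z t₁ = c` and `z' = A y + B y²`.
As long as `z > 0` this gives `z' ≥ A z + B z² > 0`, so `z` never leaves `[c, ∞)` and is a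
supersolution of the Riccati equation `x' = A x + B x²`. Its solution from `x > 0` blows up after
time `G x = (1/A) log (1 + A/(B x))`, and indeed `t + G (z t)` is nonincreasing because
`G' x = -1 / (x (A + B x))`. Since `G > 0`, the interval has length at most `G c`.
-/

open Set MeasureTheory

theorem monotoneOn_Icc_of_deriv_nonneg_of_pos {z z' : ℝ → ℝ} {a b : ℝ}
    (hz : ContinuousOn z (Icc a b)) (hz' : ∀ x ∈ Ioo a b, HasDerivAt z (z' x) x)
    (ha : 0 < z a) (hpos : ∀ x ∈ Ioo a b, 0 < z x → 0 ≤ z' x) :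
    MonotoneOn z (Icc a b) := by
  have hmono : ∀ u ≤ b, (∀ x ∈ Ioo a u, 0 < z x) → MonotoneOn z (Icc a u) := by
    intro u hub hu
    refine monotoneOn_of_hasDerivWithinAt_nonneg (convex_Icc a u)
      (hz.mono (Icc_subset_Icc_right hub)) (fun x hx => ?_) (fun x hx => ?_) (f' := z') <;>
      rw [interior_Icc] at hx
    · exact (hz' x ⟨hx.1, hx.2.trans_le hub⟩).hasDerivWithinAt
    · exact hpos x ⟨hx.1, hx.2.trans_le hub⟩ (hu x hx)
  suffices hzpos : ∀ x ∈ Icc a b, 0 < z x from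
    hmono b le_rfl fun x hx => hzpos x (Ioo_subset_Icc_self hx)
  by_contra! ⟨s, hs, hzs⟩
  -- `sInf K` is the first point where `z ≤ 0`; before it `z` is positive, hence nondecreasing.
  set K := Icc a b ∩ z ⁻¹' Iic 0
  have hK : IsClosed K := hz.preimage_isClosed_of_isClosed isClosed_Icc isClosed_Iic
  have hKbdd : BddBelow K := bddBelow_Icc.mono inter_subset_left
  obtain ⟨⟨hau, hub⟩, hzu⟩ : sInf K ∈ K := hK.csInf_mem ⟨s, hs, hzs⟩ hKbdd
  have hpos_before : ∀ x ∈ Ioo a (sInf K), 0 < z x := fun x hx => by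
    by_contra! hzx
    exact (csInf_le hKbdd ⟨⟨hx.1.le, hx.2.le.trans hub⟩, hzx⟩).not_gt hx.2
  have := hmono _ hub hpos_before ⟨le_rfl, hau⟩ ⟨hau, le_rfl⟩ hau
  exact (ha.trans_le this).not_ge hzu

noncomputable def riccatiBlowupTime (A B x : ℝ) : ℝ := 1 / A * Real.log (1 + A / (B * x))

theorem riccatiBlowupTime_pos {A B x : ℝ} (hA : 0 < A) (hB : 0 < B) (hx : 0 < x) :
    0 < riccatiBlowupTime A B x :=
  mul_pos (by positivity) (Real.log_pos (by simp only [lt_add_iff_pos_right]; positivity))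

theorem hasDerivAt_riccatiBlowupTime {A B x : ℝ} (hA : 0 < A) (hB : 0 < B) (hx : 0 < x) :
    HasDerivAt (riccatiBlowupTime A B) (-1 / (x * (A + B * x))) x := by
  have hG : riccatiBlowupTime A B = fun x => 1 / A * Real.log (1 + A / B * x⁻¹) := by
    ext x; rw [riccatiBlowupTime, ← div_div, div_eq_mul_inv (A / B)]
  rw [hG]
  refine ((((hasDerivAt_inv hx.ne').const_mul (A / B)).const_add 1).log (by positivity)
    |>.const_mul (1 / A)).congr_deriv ?_
  field_simp
  ring

theorem sub_le_riccatiBlowupTime {A B : ℝ} {z z' : ℝ → ℝ} {a b : ℝ} (hA : 0 < A) (hB : 0 < B)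
    (hab : a ≤ b) (hz : ContinuousOn z (Icc a b)) (hz' : ∀ x ∈ Ioo a b, HasDerivAt z (z' x) x)
    (ha : 0 < z a) (hsuper : ∀ x ∈ Ioo a b, 0 < z x → A * z x + B * z x ^ 2 ≤ z' x) :
    b - a ≤ riccatiBlowupTime A B (z a) := by
  have hmono := monotoneOn_Icc_of_deriv_nonneg_of_pos hz hz' ha fun x hx hzx =>
    (by positivity : 0 ≤ A * z x + B * z x ^ 2).trans (hsuper x hx hzx)
  have hzpos : ∀ x ∈ Icc a b, 0 < z x := fun x hx =>
    ha.trans_le (hmono (left_mem_Icc.2 hab) hx hx.1)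
  have hanti : AntitoneOn (fun t => t + riccatiBlowupTime A B (z t)) (Icc a b) := by
    refine antitoneOn_of_hasDerivWithinAt_nonpos (convex_Icc a b) ?_ (fun x hx => ?_)
      (fun x hx => ?_) (f' := fun x => 1 + -1 / (z x * (A + B * z x)) * z' x)
    · exact continuousOn_id.add fun x hx =>
        (hasDerivAt_riccatiBlowupTime hA hB (hzpos x hx)).continuousAt.comp_continuousWithinAt
          (hz x hx)
    all_goals rw [interior_Icc] at hx
    · exact ((hasDerivAt_id x).add ((hasDerivAt_riccatiBlowupTime hA hB
        (hzpos x (Ioo_subset_Icc_self hx))).comp x (hz' x hx))).hasDerivWithinAt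
    · have hzx := hzpos x (Ioo_subset_Icc_self hx)
      have := hsuper x hx hzx
      rw [neg_div, neg_mul, ← sub_eq_add_neg, sub_nonpos, div_mul_eq_mul_div, one_mul,
        le_div_iff₀ (by positivity)]
      linarith
  have hdecr : b + riccatiBlowupTime A B (z b) ≤ a + riccatiBlowupTime A B (z a) :=
    hanti (left_mem_Icc.2 hab) (right_mem_Icc.2 hab) hab
  linarith [riccatiBlowupTime_pos hA hB (hzpos b (right_mem_Icc.2 hab))]

theorem hasDerivAt_integral_of_continuousOn_Ico {f : ℝ → ℝ} {a c x : ℝ}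
    (hf : ContinuousOn f (Ico a c)) (hx : x ∈ Ioo a c) :
    HasDerivAt (fun t => ∫ τ in a..t, f τ) (f x) x :=
  intervalIntegral.integral_hasDerivAt_right
    ((hf.mono (Icc_subset_Ico_right hx.2)).intervalIntegrable_of_Icc hx.1.le)
    ((hf.mono Ioo_subset_Ico_self).stronglyMeasurableAtFilter isOpen_Ioo x hx)
    (hf.continuousAt (Ico_mem_nhds hx.1 hx.2))

theorem stmt12_general (A B c t1 T' : ℝ) (hA : 0 < A) (hB : 0 < B) (hc : 0 < c)
    (y : ℝ → ℝ)
    (hy_cont : ContinuousOn y (Set.Ico t1 (t1 + T')))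
    (hy : ∀ t ∈ Set.Ioo t1 (t1 + T'),
      c + ∫ τ in t1..t, (A * y τ + B * (y τ) ^ 2) ≤ y t) :
    T' ≤ 1 / A * Real.log (1 + A / (B * c)) := by
  set z := fun t => c + ∫ τ in t1..t, (A * y τ + B * (y τ) ^ 2)
  have hf : ContinuousOn (fun τ => A * y τ + B * (y τ) ^ 2) (Ico t1 (t1 + T')) := by fun_prop
  have hbound : ∀ b ∈ Ioo t1 (t1 + T'), b - t1 ≤ riccatiBlowupTime A B c := by
    rintro b ⟨htb, hb⟩
    have hzc : ContinuousOn z (Icc t1 b) := by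
      have := intervalIntegral.continuousOn_primitive_interval (μ := volume)
        (by rw [uIcc_of_le htb.le]; exact (hf.mono (Icc_subset_Ico_right hb)).integrableOn_Icc)
      exact continuousOn_const.add (by rwa [uIcc_of_le htb.le] at this)
    have hz' : ∀ x ∈ Ioo t1 b, HasDerivAt z (A * y x + B * (y x) ^ 2) x := fun x hx =>
      (hasDerivAt_integral_of_continuousOn_Ico hf ⟨hx.1, hx.2.trans hb⟩).const_add c
    have hsuper : ∀ x ∈ Ioo t1 b, 0 < z x → A * z x + B * z x ^ 2 ≤ A * y x + B * (y x) ^ 2 :=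
      fun x hx hzx => by
        have := hy x ⟨hx.1, hx.2.trans hb⟩
        gcongr
    simpa [z] using sub_le_riccatiBlowupTime hA hB htb.le hzc hz' (by simpa [z]) hsuper
  change T' ≤ riccatiBlowupTime A B c
  by_contra! hlt
  have hG := riccatiBlowupTime_pos hA hB hc
  have hmid := hbound (t1 + (riccatiBlowupTime A B c + T') / 2) ⟨by linarith, by linarith⟩
  linarith

theorem stmt12 (A B c t1 T' : ℝ) (hA : 0 < A) (hB : 0 < B) (hc : 0 < c) (hT' : 0 < T')
    (y : ℝ → ℝ)
    (hy_cont : ContinuousOn y (Set.Ico t1 (t1 + T')))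
    (hy : ∀ t ∈ Set.Ioo t1 (t1 + T'),
      c + ∫ τ in t1..t, (A * y τ + B * (y τ) ^ 2) ≤ y t) :
    T' ≤ 1 / A * Real.log (1 + A / (B * c)) :=
  stmt12_general A B c t1 T' hA hB hc y hy_cont hy
end

section
/- Let n ≥ 3 be an integer and κ > 0, and set s0 := (2 κ^{n/(n−2)} / (3(n−2)))^{(n−2)/2}. Then the function g(s) := s³ sinh(κ^{n/(n−2)} s^{−2/(n−2)}) satisfies g′(s) ≤ 0 for all s ∈ (0, s0); in particular, g is nonincreasing on (0, s0). -/
/-!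
Write `u = a s^p` with `a = κ^{n/(n-2)}` and `p = -2/(n-2) < 0`. Then
`(s^m sinh u)' = s^{m-1} (m sinh u + p u cosh u)`, and since `sinh u < cosh u` this is `≤ 0`
as soon as `-p u ≥ m`. As `p < 0`, `u` decreases in `s`, and the choice of `s0` is exactly
`-p a s0^p = 3`, so the bound holds with `m = 3` on all of `(0, s0)`.
-/

open Real Set

lemma mul_sinh_add_mul_mul_cosh_nonpos {m q u : ℝ} (hm : 0 ≤ m) (h : m ≤ -(q * u)) :
    m * sinh u + q * u * cosh u ≤ 0 := by
  have hsinh : m * sinh u ≤ m * cosh u := mul_le_mul_of_nonneg_left (sinh_lt_cosh u).le hm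
  have hcosh : m * cosh u ≤ -(q * u) * cosh u := mul_le_mul_of_nonneg_right h (cosh_pos u).le
  linarith

section PowMulSinhRpow

variable (m : ℕ) (a p : ℝ)

lemma hasDerivAt_pow_mul_sinh_const_mul_rpow {s : ℝ} (hs : 0 < s) :
    HasDerivAt (fun s : ℝ => s ^ m * sinh (a * s ^ p))
      ((m * sinh (a * s ^ p) + p * (a * s ^ p) * cosh (a * s ^ p)) * s ^ m / s) s := by
  have h : HasDerivAt (fun s : ℝ => s ^ m * sinh (a * s ^ p))
      (m * s ^ (m - 1) * sinh (a * s ^ p) + s ^ m * (cosh (a * s ^ p) * (a * (p * s ^ (p - 1)))))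
      s :=
    (hasDerivAt_pow m s).mul
      (((hasDerivAt_rpow_const (p := p) (Or.inl hs.ne')).const_mul a).sinh)
  refine h.congr_deriv ?_
  rw [rpow_sub_one hs.ne']
  rcases m with _ | k
  · simp only [CharP.cast_eq_zero, pow_zero, mul_one, zero_mul, zero_add]
    field_simp
  · simp only [Nat.add_sub_cancel, pow_succ]
    field_simp

variable {m a p}

lemma deriv_pow_mul_sinh_const_mul_rpow_nonpos (ha : 0 < a) (hp : p < 0) {s0 : ℝ}
    (hs0 : (m : ℝ) ≤ -(p * (a * s0 ^ p))) {s : ℝ} (hs : s ∈ Ioo 0 s0) :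
    deriv (fun s : ℝ => s ^ m * sinh (a * s ^ p)) s ≤ 0 := by
  rw [(hasDerivAt_pow_mul_sinh_const_mul_rpow m a p hs.1).deriv]
  have hu : a * s0 ^ p < a * s ^ p :=
    mul_lt_mul_of_pos_left (rpow_lt_rpow_of_neg hs.1 hs.2 hp) ha
  have hbound : (m : ℝ) ≤ -(p * (a * s ^ p)) := by nlinarith
  have hsign := mul_sinh_add_mul_mul_cosh_nonpos (Nat.cast_nonneg m) hbound
  exact div_nonpos_of_nonpos_of_nonneg
    (mul_nonpos_of_nonpos_of_nonneg hsign (pow_nonneg hs.1.le m)) hs.1.le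

lemma antitoneOn_pow_mul_sinh_const_mul_rpow (ha : 0 < a) (hp : p < 0) {s0 : ℝ}
    (hs0 : (m : ℝ) ≤ -(p * (a * s0 ^ p))) :
    AntitoneOn (fun s : ℝ => s ^ m * sinh (a * s ^ p)) (Ioo 0 s0) := by
  have hdiff : DifferentiableOn ℝ (fun s : ℝ => s ^ m * sinh (a * s ^ p)) (Ioo 0 s0) :=
    fun s hs => (hasDerivAt_pow_mul_sinh_const_mul_rpow m a p hs.1).differentiableAt
      |>.differentiableWithinAt
  refine antitoneOn_of_deriv_nonpos (convex_Ioo 0 s0) hdiff.continuousOn ?_ ?_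
  · rwa [interior_Ioo]
  · rw [interior_Ioo]
    exact fun s hs => deriv_pow_mul_sinh_const_mul_rpow_nonpos ha hp hs0 hs

end PowMulSinhRpow

theorem stmt13 (n : ℕ) (hn : 3 ≤ n) (κ : ℝ) (hκ : 0 < κ)
    (s0 : ℝ)
    (hs0 : s0 = (2 * κ ^ ((n : ℝ) / ((n : ℝ) - 2)) / (3 * ((n : ℝ) - 2))) ^ (((n : ℝ) - 2) / 2)) :
    (∀ s ∈ Set.Ioo (0 : ℝ) s0,
      deriv (fun s : ℝ =>
        s ^ 3 * Real.sinh (κ ^ ((n : ℝ) / ((n : ℝ) - 2)) * s ^ (-(2 : ℝ) / ((n : ℝ) - 2)))) s ≤ 0) ∧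
    AntitoneOn (fun s : ℝ =>
      s ^ 3 * Real.sinh (κ ^ ((n : ℝ) / ((n : ℝ) - 2)) * s ^ (-(2 : ℝ) / ((n : ℝ) - 2))))
      (Set.Ioo (0 : ℝ) s0) := by
  have hn2 : (0 : ℝ) < n - 2 := by
    have : (3 : ℝ) ≤ n := by exact_mod_cast hn
    linarith
  set a := κ ^ ((n : ℝ) / ((n : ℝ) - 2))
  have ha : 0 < a := rpow_pos_of_pos hκ _
  have hp : -(2 : ℝ) / (n - 2) < 0 := div_neg_of_neg_of_pos (by norm_num) hn2
  have hthreshold : ((3 : ℕ) : ℝ) ≤ -(-(2 : ℝ) / (n - 2) * (a * s0 ^ (-(2 : ℝ) / (n - 2)))) := by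
    rw [hs0, ← rpow_mul (by positivity), show (n - 2) / 2 * (-2 / (n - 2)) = (-1 : ℝ) by
      field_simp, rpow_neg_one]
    field_simp
    norm_num
  exact ⟨fun s hs => deriv_pow_mul_sinh_const_mul_rpow_nonpos ha hp hthreshold hs,
    antitoneOn_pow_mul_sinh_const_mul_rpow ha hp hthreshold⟩
end
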